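/- arXiv:2009.00184 — 2 statements merged into one kernel-verified Lean document; each statement's English description precedes it below -/
import Mathlib

section
/- Let λ, Λ > 0, set α = λ/(λ+Λ), and let 0 < x̄ < 1. Define r = (λ/Λ + e^{1-x̄})^{-1}, q = r(λ/Λ - e^{1-x̄}(e^{α x̄} - 1)), and p(x) = α r e^{1-x̄+α x̄} e^{-α x} for 0 < x ≤ x̄ and p(x) = r e^{1-x} for x̄ < x < 1. Then the total mass condition q + r + ∫_0^1 p(x) dx = 1 holds. -/
/-!
Both pieces of `p` integrate in closed form: the first gives `r e^{1-x̄} (e^{αx̄} - 1)`, which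
cancels the matching term of `q`, and the second gives `r (e^{1-x̄} - 1)`. What is left is
`r (λ/Λ + e^{1-x̄}) = 1`.
-/

open Real Set MeasureTheory

theorem intervalIntegral.integral_ite_le_eq_add {f g : ℝ → ℝ} {a b c : ℝ} (hac : a ≤ c)
    (hcb : c ≤ b) (hf : IntervalIntegrable f volume a c)
    (hg : IntervalIntegrable g volume c b) :
    ∫ x in a..b, (if x ≤ c then f x else g x) = (∫ x in a..c, f x) + ∫ x in c..b, g x := by
  have h_left : EqOn (fun x => if x ≤ c then f x else g x) f (uIcc a c) := by
    intro x hx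
    rw [uIcc_of_le hac] at hx
    exact if_pos hx.2
  have h_right : EqOn (fun x => if x ≤ c then f x else g x) g (uIoc c b) := by
    intro x hx
    rw [uIoc_of_le hcb] at hx
    exact if_neg (not_le.mpr hx.1)
  rw [← intervalIntegral.integral_add_adjacent_intervals
      (hf.congr (h_left.mono uIoc_subset_uIcc).symm)
      (hg.congr_ae (ae_restrict_of_forall_mem measurableSet_uIoc h_right.symm)),
    intervalIntegral.integral_congr h_left,
    intervalIntegral.integral_congr_ae (ae_of_all _ fun x hx => h_right hx)]

theorem integral_mul_exp_neg_mul (c a b : ℝ) :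
    ∫ x in a..b, c * exp (-c * x) = exp (-c * a) - exp (-c * b) := by
  have hderiv (x : ℝ) : HasDerivAt (fun x => -exp (-c * x)) (c * exp (-c * x)) x :=
    (((hasDerivAt_id x).const_mul (-c)).exp.neg).congr_deriv (by simp only [id]; ring)
  rw [intervalIntegral.integral_eq_sub_of_hasDerivAt (fun x _ => hderiv x)
    (Continuous.intervalIntegrable (by fun_prop) a b)]
  ring

theorem integral_exp_one_sub (a b : ℝ) :
    ∫ x in a..b, exp (1 - x) = exp (1 - a) - exp (1 - b) := by
  rw [intervalIntegral.integral_comp_sub_left (fun x => exp x), integral_exp]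

theorem mass_conservation_general (lam Lam xb : ℝ) (hlam : 0 < lam) (hLam : 0 < Lam)
    (hxb : xb ∈ Ioo (0:ℝ) 1)
    (α r q : ℝ) (p : ℝ → ℝ)
    (hr : r = (lam / Lam + exp (1 - xb))⁻¹)
    (hq : q = r * (lam / Lam - exp (1 - xb) * (exp (α * xb) - 1)))
    (hp : ∀ x, p x = if x ≤ xb then α * r * exp (1 - xb + α * xb) * exp (-α * x)
        else r * exp (1 - x)) :
    q + r + ∫ x in (0:ℝ)..1, p x = 1 := by
  have hp_factored : p = fun x => if x ≤ xb then r * exp (1 - xb + α * xb) * (α * exp (-α * x))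
      else r * exp (1 - x) := by
    ext x
    rw [hp]
    split_ifs <;> ring
  have h_denom : lam / Lam + exp (1 - xb) ≠ 0 := by positivity
  rw [hp_factored, intervalIntegral.integral_ite_le_eq_add hxb.1.le hxb.2.le
      (Continuous.intervalIntegrable (by fun_prop) _ _)
      (Continuous.intervalIntegrable (by fun_prop) _ _),
    intervalIntegral.integral_const_mul (r * _), integral_mul_exp_neg_mul,
    intervalIntegral.integral_const_mul, integral_exp_one_sub, hq, hr, exp_add, mul_zero,
    exp_zero, sub_self, exp_zero, neg_mul, exp_neg]
  field_simp
  ring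

theorem mass_conservation (lam Lam xb : ℝ) (hlam : 0 < lam) (hLam : 0 < Lam)
    (hxb : xb ∈ Ioo (0:ℝ) 1)
    (α r q : ℝ) (p : ℝ → ℝ)
    (hα : α = lam / (lam + Lam))
    (hr : r = (lam / Lam + exp (1 - xb))⁻¹)
    (hq : q = r * (lam / Lam - exp (1 - xb) * (exp (α * xb) - 1)))
    (hp : ∀ x, p x = if x ≤ xb then α * r * exp (1 - xb + α * xb) * exp (-α * x)
        else r * exp (1 - x)) :
    q + r + ∫ x in (0:ℝ)..1, p x = 1 :=
  mass_conservation_general lam Lam xb hlam hLam hxb α r q p hr hq hp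
end

section
/- Let Φ : [0,1] → ℝ be bounded, continuous on (0,1], and differentiable on (0,1), with possibly Φ(0) ≠ lim_{x→0+} Φ(x) =: Φ(+0). Then for x ∈ (0,1), d/dx ∫_0^1 Φ(max(x - z, 0)) dz = Φ(x) - Φ(0). -/
open Set MeasureTheory
open scoped Interval

/-! On `[0, x]` the integrand is `Φ (x - z)` and on `[x, 1]` it is the constant `Φ 0`, so the
integral equals `∫₀ˣ Φ + (1 - x) Φ 0`. The value `Φ 0` is taken on a whole interval rather than
on a null set, which is why it, and not `Φ (+0)`, survives; the fundamental theorem of calculus at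
a point of continuity of `Φ` then gives the derivative `Φ x - Φ 0`. -/

variable {E : Type*} [NormedAddCommGroup E]

theorem intervalIntegrable_of_continuousOn_Ioc_of_bounded {f : ℝ → E} {a b M : ℝ} (hab : a ≤ b)
    (hcont : ContinuousOn f (Ioc a b)) (hbdd : ∀ x ∈ Ioc a b, ‖f x‖ ≤ M) :
    IntervalIntegrable f volume a b := by
  rw [intervalIntegrable_iff_integrableOn_Ioc_of_le hab]
  refine ⟨hcont.aestronglyMeasurable measurableSet_Ioc, ?_⟩
  refine HasFiniteIntegral.restrict_of_bounded (C := M) measure_Ioc_lt_top ?_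
  exact ae_restrict_of_forall_mem measurableSet_Ioc hbdd

theorem integral_comp_max_sub_zero [NormedSpace ℝ E] [CompleteSpace E] {Φ : ℝ → E} {x b : ℝ}
    (hx : 0 ≤ x) (hxb : x ≤ b) (hΦ : IntervalIntegrable Φ volume 0 x) :
    ∫ z in (0:ℝ)..b, Φ (max (x - z) 0) = (∫ u in (0:ℝ)..x, Φ u) + (b - x) • Φ 0 := by
  have h_left : EqOn (fun z => Φ (max (x - z) 0)) (fun z => Φ (x - z)) [[0, x]] := by
    intro z hz
    rw [uIcc_of_le hx] at hz
    simp only [max_eq_left (sub_nonneg.2 hz.2)]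
  have h_right : EqOn (fun z => Φ (max (x - z) 0)) (fun _ => Φ 0) [[x, b]] := by
    intro z hz
    rw [uIcc_of_le hxb] at hz
    simp only [max_eq_right (sub_nonpos.2 hz.1)]
  have hΦ_reflected : IntervalIntegrable (fun z => Φ (x - z)) volume 0 x := by
    simpa using (hΦ.comp_sub_left x).symm
  have h_int_left : IntervalIntegrable (fun z => Φ (max (x - z) 0)) volume 0 x :=
    hΦ_reflected.congr (h_left.symm.mono uIoc_subset_uIcc)
  have h_int_right : IntervalIntegrable (fun z => Φ (max (x - z) 0)) volume x b :=
    intervalIntegrable_const.congr (h_right.symm.mono uIoc_subset_uIcc)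
  rw [← intervalIntegral.integral_add_adjacent_intervals h_int_left h_int_right,
    intervalIntegral.integral_congr h_left, intervalIntegral.integral_congr h_right,
    intervalIntegral.integral_comp_sub_left, intervalIntegral.integral_const]
  simp

theorem deriv_integral_max_general (Φ : ℝ → ℝ)
    (hbdd : ∃ M : ℝ, ∀ x ∈ Icc (0:ℝ) 1, |Φ x| ≤ M)
    (hcont : ContinuousOn Φ (Ioc (0:ℝ) 1)) :
    ∀ x ∈ Ioo (0:ℝ) 1,
      HasDerivAt (fun x' => ∫ z in (0:ℝ)..1, Φ (max (x' - z) 0)) (Φ x - Φ 0) x := by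
  obtain ⟨M, hM⟩ := hbdd
  have hint : ∀ t ∈ Icc (0:ℝ) 1, IntervalIntegrable Φ volume 0 t := fun t ht =>
    intervalIntegrable_of_continuousOn_Ioc_of_bounded ht.1
      (hcont.mono (Ioc_subset_Ioc_right ht.2))
      fun z hz => hM z ⟨hz.1.le, hz.2.trans ht.2⟩
  intro x hx
  have hd_integral : HasDerivAt (fun x' => ∫ u in (0:ℝ)..x', Φ u) (Φ x) x :=
    intervalIntegral.integral_hasDerivAt_right (hint x (Ioo_subset_Icc_self hx))
      ((hcont.mono Ioo_subset_Ioc_self).stronglyMeasurableAtFilter isOpen_Ioo x hx)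
      (hcont.continuousAt (Ioc_mem_nhds hx.1 hx.2))
  have hd : HasDerivAt (fun x' => (∫ u in (0:ℝ)..x', Φ u) + (1 - x') * Φ 0) (Φ x - Φ 0) x :=
    (hd_integral.add (((hasDerivAt_id' x).const_sub 1).mul_const (Φ 0))).congr_deriv (by ring)
  refine hd.congr_of_eventuallyEq ?_
  filter_upwards [Ioo_mem_nhds hx.1 hx.2] with x' hx'
  rw [integral_comp_max_sub_zero hx'.1.le hx'.2.le (hint x' (Ioo_subset_Icc_self hx')), smul_eq_mul]

theorem deriv_integral_max (Φ : ℝ → ℝ) (Φp0 : ℝ)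
    (hbdd : ∃ M : ℝ, ∀ x ∈ Icc (0:ℝ) 1, |Φ x| ≤ M)
    (hcont : ContinuousOn Φ (Ioc (0:ℝ) 1))
    (hdiff : DifferentiableOn ℝ Φ (Ioo (0:ℝ) 1))
    (hlim : Filter.Tendsto Φ (nhdsWithin 0 (Ioi (0:ℝ))) (nhds Φp0)) :
    ∀ x ∈ Ioo (0:ℝ) 1,
      HasDerivAt (fun x' => ∫ z in (0:ℝ)..1, Φ (max (x' - z) 0)) (Φ x - Φ 0) x :=
  deriv_integral_max_general Φ hbdd hcont
end
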